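/- arXiv:2306.17769 — 3 statements merged into one kernel-verified Lean document; each statement's English description precedes it below -/
import Mathlib

section
/- For any 2×2 integer matrix A and any integer p, there exist 2×2 integer matrices X and Y with A = X + Y and det(X) = det(Y) = p. -/
open Matrix

namespace VasersteinAux

abbrev M2 := Matrix (Fin 2) (Fin 2) ℤ

lemma natAbs_emod_lt' (b a : ℤ) (h : a ≠ 0) : (b % a).natAbs < a.natAbs := by
  have h1 := Int.emod_nonneg b h
  have h2 := Int.emod_lt b h
  omega

/-- Euclid on the first column: clear the lower-left entry by left mult. -/
lemma clear_c : ∀ (n : ℕ) (A : M2), (A 0 0).natAbs ≤ n →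
    ∃ U : M2, U.det = 1 ∧ (U * A) 1 0 = 0 ∧ (U * A) 0 0 ∣ A 0 0 ∧ (U * A) 0 0 ∣ A 1 0 := by
  intro n
  induction n using Nat.strong_induction_on with
  | _ n ih =>
    intro A hA
    by_cases ha : A 0 0 = 0
    · refine ⟨!![0,1;-1,0], by simp [det_fin_two_of], ?_, ?_, ?_⟩ <;>
      · rw [Matrix.eta_fin_two A, mul_fin_two]
        simp [ha]
    · set a := A 0 0 with ha00
      set b := A 0 1 with hb0
      set c := A 1 0 with hc0
      set d := A 1 1 with hd0
      set q : ℤ := c / a with hq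
      set r : ℤ := c % a with hr
      have hrdef : r = c - a * q := Int.emod_def c a
      have hBA : !![(0:ℤ),1;-1,0] * !![(1:ℤ),0;-q,1] * A = !![r, d - q*b; -a, -b] := by
        rw [mul_assoc, Matrix.eta_fin_two A, mul_fin_two, mul_fin_two, ← ha00, ← hb0, ← hc0,
          ← hd0, hrdef]
        congr 1 <;> ring
      have hrn : r.natAbs < n := lt_of_lt_of_le (natAbs_emod_lt' c a ha) hA
      set B : M2 := !![r, d - q*b; -a, -b] with hB
      have hB00 : B 0 0 = r := by rw [hB]; simp
      have hB10 : B 1 0 = -a := by rw [hB]; simp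
      obtain ⟨U', hU'det, h1, h2, h3⟩ := ih r.natAbs hrn B (le_of_eq (by rw [hB00]))
      have key : U' * !![(0:ℤ),1;-1,0] * !![(1:ℤ),0;-q,1] * A = U' * B := by
        rw [← hBA]; noncomm_ring
      have hg1 : (U' * B) 0 0 ∣ r := by rw [← hB00]; exact h2
      have hg2 : (U' * B) 0 0 ∣ a := by
        have := h3; rw [hB10] at this; exact (dvd_neg).mp this
      have hgc : (U' * B) 0 0 ∣ c := by
        have : (U' * B) 0 0 ∣ a * q + r := dvd_add (hg2.mul_right q) hg1
        rwa [hrdef, add_sub_cancel] at this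
      refine ⟨U' * !![(0:ℤ),1;-1,0] * !![(1:ℤ),0;-q,1], ?_, ?_, ?_, ?_⟩
      · rw [det_mul, det_mul, hU'det]; simp [det_fin_two_of]
      · rw [key]; exact h1
      · rw [key]; exact hg2
      · rw [key]; exact hgc

/-- Diagonalize an upper-triangular matrix. -/
lemma tri : ∀ (n : ℕ) (A : M2), (A 0 0).natAbs ≤ n → A 1 0 = 0 →
    ∃ U V : M2, U.det = 1 ∧ V.det = 1 ∧ (U * A * V) 1 0 = 0 ∧ (U * A * V) 0 1 = 0 := by
  intro n
  induction n using Nat.strong_induction_on with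
  | _ n ih =>
    intro A hA hc
    by_cases ha : A 0 0 = 0
    · -- A = !![0, b; 0, d]; swap columns then clear lower-left
      set C : M2 := A * !![(0:ℤ),-1;1,0] with hCdef
      have hC : C = !![A 0 1, 0; A 1 1, 0] := by
        rw [hCdef]
        conv_lhs => rw [Matrix.eta_fin_two A]
        rw [mul_fin_two, ha, hc]
        congr 1 <;> ring
      obtain ⟨U, hUdet, h1, -, -⟩ := clear_c (C 0 0).natAbs C le_rfl
      refine ⟨U, !![(0:ℤ),-1;1,0], hUdet, by simp [det_fin_two_of], ?_, ?_⟩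
      · rw [mul_assoc, ← hCdef]; exact h1
      · rw [mul_assoc, ← hCdef, mul_apply, Fin.sum_univ_two, hC]
        simp
    · by_cases hdvd : A 0 0 ∣ A 0 1
      · obtain ⟨k, hk⟩ := hdvd
        refine ⟨1, !![(1:ℤ),-k;0,1], det_one, by simp [det_fin_two_of], ?_, ?_⟩
        · rw [one_mul, mul_apply, Fin.sum_univ_two]
          simp [hc]
        · rw [one_mul, mul_apply, Fin.sum_univ_two]
          simp [hk]
      · set a := A 0 0 with ha00
        set b := A 0 1 with hb0
        set d := A 1 1 with hd0
        set q : ℤ := b / a with hq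
        set r : ℤ := b % a with hr
        have hrdef : r = b - a * q := Int.emod_def b a
        have hr0 : r ≠ 0 := fun h => hdvd (by rw [Int.dvd_iff_emod_eq_zero]; exact h)
        set C : M2 := A * (!![(1:ℤ),-q;0,1] * !![(0:ℤ),-1;1,0]) with hCdef
        have hC : C = !![r, -a; d, 0] := by
          rw [hCdef, mul_fin_two, Matrix.eta_fin_two A, mul_fin_two, ← ha00, ← hb0, ← hd0, hc,
            hrdef]
          congr 1 <;> ring
        obtain ⟨U1, hU1det, h1, h2, -⟩ := clear_c (C 0 0).natAbs C le_rfl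
        have hC00 : C 0 0 = r := by rw [hC]; simp
        have hg : (U1 * C) 0 0 ∣ r := hC00 ▸ h2
        have hgn : ((U1 * C) 0 0).natAbs < n := by
          have h3 : ((U1 * C) 0 0).natAbs ≤ r.natAbs := by
            refine Nat.le_of_dvd ?_ (Int.natAbs_dvd_natAbs.mpr hg)
            exact Int.natAbs_pos.mpr hr0
          have h4 : r.natAbs < a.natAbs := natAbs_emod_lt' b a ha
          omega
        obtain ⟨U2, V2, hU2det, hV2det, g1, g2⟩ := ih _ hgn (U1 * C) le_rfl h1
        refine ⟨U2 * U1, !![(1:ℤ),-q;0,1] * !![(0:ℤ),-1;1,0] * V2, ?_, ?_, ?_, ?_⟩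
        · rw [det_mul, hU2det, hU1det]; ring
        · rw [det_mul, det_mul, hV2det, det_fin_two_of, det_fin_two_of]; ring
        · have : U2 * U1 * A * (!![(1:ℤ),-q;0,1] * !![(0:ℤ),-1;1,0] * V2)
              = U2 * (U1 * C) * V2 := by
            rw [hCdef]; noncomm_ring
          rw [this]; exact g1
        · have : U2 * U1 * A * (!![(1:ℤ),-q;0,1] * !![(0:ℤ),-1;1,0] * V2)
              = U2 * (U1 * C) * V2 := by
            rw [hCdef]; noncomm_ring
          rw [this]; exact g2

lemma smith (A : M2) :
    ∃ U V : M2, U.det = 1 ∧ V.det = 1 ∧ (U * A * V) 1 0 = 0 ∧ (U * A * V) 0 1 = 0 := by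
  obtain ⟨U1, hU1det, h1, -, -⟩ := clear_c (A 0 0).natAbs A le_rfl
  obtain ⟨U2, V, hU2det, hVdet, g1, g2⟩ := tri ((U1 * A) 0 0).natAbs (U1 * A) le_rfl h1
  exact ⟨U2 * U1, V, by rw [det_mul, hU2det, hU1det]; ring, hVdet,
    by rw [mul_assoc U2 U1 A]; exact g1, by rw [mul_assoc U2 U1 A]; exact g2⟩

end VasersteinAux

open VasersteinAux in
theorem vaserstein_matrix_goldbach (A : Matrix (Fin 2) (Fin 2) ℤ) (p : ℤ) :
    ∃ X Y : Matrix (Fin 2) (Fin 2) ℤ, A = X + Y ∧ X.det = p ∧ Y.det = p := by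
  obtain ⟨U, V, hUdet, hVdet, h10, h01⟩ := smith A
  set D : M2 := U * A * V with hDdef
  set e := D 0 0 with he
  set f := D 1 1 with hf
  have hD : D = !![e, 0; 0, f] := by
    rw [Matrix.eta_fin_two D, h10, h01]
  set X0 : M2 := !![0, -p; 1, f] with hX0
  set Y0 : M2 := !![e, p; -1, 0] with hY0
  have hsum : D = X0 + Y0 := by
    rw [hD, hX0, hY0]
    ext i j
    fin_cases i <;> fin_cases j <;> simp
  have hX0det : X0.det = p := by rw [hX0, det_fin_two_of]; ring
  have hY0det : Y0.det = p := by rw [hY0, det_fin_two_of]; ring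
  have hUadj : U.adjugate * U = 1 := by rw [adjugate_mul, hUdet, one_smul]
  have hVadj : V * V.adjugate = 1 := by rw [mul_adjugate, hVdet, one_smul]
  have hUa_det : U.adjugate.det = 1 := by
    rw [det_adjugate, hUdet]; simp
  have hVa_det : V.adjugate.det = 1 := by
    rw [det_adjugate, hVdet]; simp
  refine ⟨U.adjugate * X0 * V.adjugate, U.adjugate * Y0 * V.adjugate, ?_, ?_, ?_⟩
  · have hA : A = U.adjugate * D * V.adjugate := by
      have h : U.adjugate * D * V.adjugate = (U.adjugate * U) * A * (V * V.adjugate) := by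
        rw [hDdef]; noncomm_ring
      rw [h, hUadj, hVadj, one_mul, mul_one]
    rw [hA, hsum]; noncomm_ring
  · rw [det_mul, det_mul, hUa_det, hX0det, hVa_det]; ring
  · rw [det_mul, det_mul, hUa_det, hY0det, hVa_det]; ring
end

section
/- For any n×n integer matrix A with n ≥ 3 odd, and any integer p, there exist X, Y, Z in M_n(ℤ) with A = X + Y + Z and det(X) = det(Y) = det(Z) = p. -/
/-!
Take `x = (p, 1, …, 1)`. Let `Z` have diagonal `diag A - 2x`, ones on the superdiagonal, a
corner entry `c` at the bottom left and zeros elsewhere; expanding along the first column gives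
`det Z = ∏ Zᵢᵢ ± c`, so a suitable `c` makes `det Z = p`. Then `A - Z` has diagonal `2x`, hence
splits into a lower and an upper triangular matrix, both with diagonal `x` and determinant `p`.
-/

namespace Matrix

variable {R : Type*} [CommRing R]

theorem exists_add_eq_det_eq_prod {ι : Type*} [Fintype ι] [LinearOrder ι]
    (B : Matrix ι ι R) (d e : ι → R) (h : B.diag = d + e) :
    ∃ L U : Matrix ι ι R, B = L + U ∧ L.det = ∏ i, d i ∧ U.det = ∏ i, e i := by
  refine ⟨of fun i j => if i = j then d i else if j < i then B i j else 0,
    of fun i j => if i = j then e i else if i < j then B i j else 0, ?_, ?_, ?_⟩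
  · ext i j
    rcases lt_trichotomy i j with hij | rfl | hij
    · simp [hij.ne, hij.not_gt, hij]
    · simpa using congrFun h i
    · simp [hij.ne', hij.not_gt, hij]
  · refine (det_of_isLowerTriangular _ fun i j hij => ?_).trans (by simp)
    have hij : i < j := hij
    simp [hij.ne, hij.not_gt]
  · refine (det_of_isUpperTriangular fun i j hij => ?_).trans (by simp)
    have hij : j < i := hij
    simp [hij.ne', hij.not_gt]

variable {m : ℕ}

def cyclicBidiagonal (z : Fin (m + 2) → R) (c : R) : Matrix (Fin (m + 2)) (Fin (m + 2)) R :=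
  of fun i j =>
    if i = j then z i
    else if (j : ℕ) = i + 1 then 1
    else if (i : ℕ) = m + 1 ∧ (j : ℕ) = 0 then c
    else 0

variable (z : Fin (m + 2) → R) (c : R)

@[simp]
theorem cyclicBidiagonal_apply_self (i : Fin (m + 2)) : cyclicBidiagonal z c i i = z i :=
  if_pos rfl

theorem cyclicBidiagonal_castSucc_succ (i : Fin (m + 1)) :
    cyclicBidiagonal z c i.castSucc i.succ = 1 := by
  rw [cyclicBidiagonal, of_apply, if_neg Fin.castSucc_lt_succ.ne, if_pos (by simp)]

theorem cyclicBidiagonal_last_zero : cyclicBidiagonal z c (Fin.last _) 0 = c := by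
  simp [cyclicBidiagonal]

theorem cyclicBidiagonal_apply_eq_zero {i j : Fin (m + 2)} (h₁ : (i : ℕ) ≠ j)
    (h₂ : (j : ℕ) ≠ i + 1) (h₃ : (i : ℕ) ≠ m + 1 ∨ (j : ℕ) ≠ 0) :
    cyclicBidiagonal z c i j = 0 := by
  rw [cyclicBidiagonal, of_apply, if_neg (Fin.val_ne_iff.mp h₁), if_neg h₂, if_neg (by omega)]

theorem det_submatrix_zero_cyclicBidiagonal :
    ((cyclicBidiagonal z c).submatrix (Fin.succAbove 0) Fin.succ).det =
      ∏ i : Fin (m + 1), z i.succ := by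
  refine (det_of_isUpperTriangular fun i j hij => ?_).trans (by simp)
  have : (j : ℕ) < i := hij
  apply cyclicBidiagonal_apply_eq_zero <;> simp only [Fin.succAbove_zero, Fin.val_succ] <;> omega

theorem det_submatrix_last_cyclicBidiagonal :
    ((cyclicBidiagonal z c).submatrix (Fin.last _).succAbove Fin.succ).det = 1 := by
  refine (det_of_isLowerTriangular _ fun i j hij => ?_).trans ?_
  · have : (i : ℕ) < j := hij
    apply cyclicBidiagonal_apply_eq_zero <;>
      simp only [Fin.succAbove_last, Fin.val_castSucc, Fin.val_succ] <;> omega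
  · simp [cyclicBidiagonal_castSucc_succ]

theorem det_cyclicBidiagonal :
    (cyclicBidiagonal z c).det = ∏ i, z i + (-1) ^ (m + 1) * c := by
  rw [det_succ_column_zero, Fin.sum_univ_succ, Fin.sum_univ_castSucc, Finset.sum_eq_zero]
  · rw [Fin.succ_last, det_submatrix_zero_cyclicBidiagonal, det_submatrix_last_cyclicBidiagonal,
      cyclicBidiagonal_apply_self, cyclicBidiagonal_last_zero, Fin.prod_univ_succ z]
    simp
  · intro i _
    rw [cyclicBidiagonal_apply_eq_zero, mul_zero, zero_mul] <;>
      simp only [Fin.val_castSucc, Fin.val_succ, Fin.val_zero] <;> omega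

theorem exists_diag_eq_det_eq (p : R) :
    ∃ M : Matrix (Fin (m + 2)) (Fin (m + 2)) R, M.diag = z ∧ M.det = p := by
  refine ⟨cyclicBidiagonal z ((-1) ^ (m + 1) * (p - ∏ i, z i)), funext fun i => by simp, ?_⟩
  rw [det_cyclicBidiagonal, ← mul_assoc, ← mul_pow, neg_one_mul, neg_neg, one_pow, one_mul,
    add_sub_cancel]

end Matrix

open Matrix in
theorem qin_ternary_matrix_goldbach_general (n : ℕ) (hn3 : 3 ≤ n)
    (A : Matrix (Fin n) (Fin n) ℤ) (p : ℤ) :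
    ∃ X Y Z : Matrix (Fin n) (Fin n) ℤ,
      A = X + Y + Z ∧ X.det = p ∧ Y.det = p ∧ Z.det = p := by
  obtain ⟨m, rfl⟩ : ∃ m, n = m + 2 := ⟨n - 2, by omega⟩
  set x : Fin (m + 2) → ℤ := Pi.mulSingle 0 p
  have hx : ∏ i, x i = p := Fintype.prod_pi_mulSingle' 0 p
  obtain ⟨Z, hZ, hZdet⟩ := exists_diag_eq_det_eq (A.diag - x - x) p
  obtain ⟨X, Y, hXY, hX, hY⟩ := exists_add_eq_det_eq_prod (A - Z) x x (by
    rw [diag_sub, hZ]; abel)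
  exact ⟨X, Y, Z, by rw [← hXY, sub_add_cancel], hX.trans hx, hY.trans hx, hZdet⟩

theorem qin_ternary_matrix_goldbach (n : ℕ) (hn3 : 3 ≤ n) (hn : Odd n)
    (A : Matrix (Fin n) (Fin n) ℤ) (p : ℤ) :
    ∃ X Y Z : Matrix (Fin n) (Fin n) ℤ,
      A = X + Y + Z ∧ X.det = p ∧ Y.det = p ∧ Z.det = p :=
  qin_ternary_matrix_goldbach_general n hn3 A p
end

section
/- In ℤ[x], every polynomial of degree n ≥ 1 can be expressed as the sum of two irreducible polynomials, each of degree n. -/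
/-!
Let `a` be the leading coefficient of `f`, `n` its degree, and choose a unit `ε` with
`m := a - ε ≠ 0`, a prime `q ∤ m` and a prime `p ∤ q²m`. We write
`f = (ε Xⁿ + p G) + (m Xⁿ + q H)` with `deg G, deg H < n`: since `p` and `q` are coprime, any
splitting `p G₀ + q H₀` of the constant coefficient of `f - a Xⁿ` lifts to such `G`, `H`.
Choosing `G₀ ≡ 1 mod p` and `H₀ ≡ 1 mod qm` (possible because `q²m` and `p²` are coprime)
makes the first summand Eisenstein at `p` and the second Eisenstein at `q` and primitive, as
its content divides both `m` and `q H₀`.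
-/

open Polynomial

theorem IsCoprime.exists_mul_one_add_mul_add_mul_one_add_mul_eq {R : Type*} [CommRing R]
    {p q m : R} (h : IsCoprime (q ^ 2 * m) (p ^ 2)) (r : R) :
    ∃ s t : R, p * (1 + p * s) + q * (1 + q * m * t) = r := by
  obtain ⟨x, y, hxy⟩ := h
  exact ⟨y * (r - p - q), x * (r - p - q), by linear_combination (r - p - q) * hxy⟩

theorem Int.exists_prime_not_dvd {m : ℤ} (hm : m ≠ 0) : ∃ p : ℤ, Prime p ∧ ¬ p ∣ m := by
  obtain ⟨p, hle, hp⟩ := Nat.exists_infinite_primes (m.natAbs + 1)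
  refine ⟨p, Nat.prime_iff_prime_int.mp hp, fun hdvd => ?_⟩
  have := Nat.le_of_dvd (Int.natAbs_pos.mpr hm) (Int.natCast_dvd.mp hdvd)
  omega

namespace Polynomial

variable {R : Type*} [CommRing R]

theorem isPrimitive_of_isCoprime_coeff {f : R[X]} {i j : ℕ}
    (h : IsCoprime (f.coeff i) (f.coeff j)) : f.IsPrimitive := fun r hr =>
  h.isUnit_of_dvd' ((C_dvd_iff_dvd_coeff r f).mp hr i) ((C_dvd_iff_dvd_coeff r f).mp hr j)

theorem coeff_C_mul_X_pow_add_C_mul (c p : R) (G : R[X]) (n i : ℕ) :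
    (C c * X ^ n + C p * G).coeff i = (if i = n then c else 0) + p * G.coeff i := by
  simp

theorem natDegree_C_mul_X_pow_add_C_mul {c : R} (hc : c ≠ 0) (p : R) {G : R[X]} {n : ℕ}
    (hG : G.degree < n) : (C c * X ^ n + C p * G).natDegree = n := by
  rw [natDegree_add_eq_left_of_degree_lt, natDegree_C_mul_X_pow n c hc]
  rw [degree_C_mul_X_pow n hc, C_mul']
  exact (degree_smul_le p G).trans_lt hG

theorem irreducible_C_mul_X_pow_add_C_mul [IsDomain R] {c p : R} (hp : Prime p) {G : R[X]}
    {n : ℕ} (hn : 0 < n) (hG : G.degree < n) (hG0 : ¬ p ∣ G.coeff 0)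
    (hc : IsCoprime c (p * G.coeff 0)) :
    Irreducible (C c * X ^ n + C p * G) := by
  have hc0 : c ≠ 0 := by
    rintro rfl
    exact hp.not_isUnit (isUnit_of_mul_isUnit_left (isCoprime_zero_left.mp hc))
  have hdeg := natDegree_C_mul_X_pow_add_C_mul hc0 p hG
  have hcoeff := coeff_C_mul_X_pow_add_C_mul c p G n
  refine IsEisensteinAt.irreducible ⟨?_, fun {i} hi => ?_, ?_⟩
    ((Ideal.span_singleton_prime hp.ne_zero).mpr hp) ?_ (by rwa [hdeg])
  · rw [leadingCoeff, hdeg, hcoeff, if_pos rfl, coeff_eq_zero_of_degree_lt hG, mul_zero, add_zero,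
      Ideal.mem_span_singleton]
    exact fun hpc => hp.not_isUnit (hc.isUnit_of_dvd' hpc (dvd_mul_right p _))
  · rw [hdeg] at hi
    rw [hcoeff, if_neg hi.ne, zero_add, Ideal.mem_span_singleton]
    exact dvd_mul_right p _
  · rw [hcoeff, if_neg hn.ne, zero_add, Ideal.span_singleton_pow, Ideal.mem_span_singleton, sq]
    exact fun h => hG0 ((mul_dvd_mul_iff_left hp.ne_zero).mp h)
  · refine isPrimitive_of_isCoprime_coeff (i := n) (j := 0) ?_
    rwa [hcoeff, hcoeff, if_pos rfl, if_neg hn.ne, coeff_eq_zero_of_degree_lt hG, mul_zero,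
      add_zero, zero_add]

theorem exists_C_mul_add_C_mul_eq {E : R[X]} {n : ℕ} (hn : 0 < n) (hE : E.degree < n) {p q : R}
    (hpq : IsCoprime p q) {a b : R} (hab : p * a + q * b = E.coeff 0) :
    ∃ G H : R[X], G.degree < n ∧ H.degree < n ∧ G.coeff 0 = a ∧ H.coeff 0 = b ∧
      C p * G + C q * H = E := by
  obtain ⟨u, v, huv⟩ := hpq
  have hC : ∀ r : R, C r ∈ degreeLT R n := fun r =>
    mem_degreeLT.mpr (degree_C_le.trans_lt (by exact_mod_cast hn))
  have hE' : E - C (E.coeff 0) ∈ degreeLT R n := sub_mem (mem_degreeLT.mpr hE) (hC _)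
  have hlift : ∀ w r : R, C w * (E - C (E.coeff 0)) + C r ∈ degreeLT R n := fun w r =>
    add_mem (by rw [C_mul']; exact Submodule.smul_mem _ w hE') (hC r)
  refine ⟨C u * (E - C (E.coeff 0)) + C a, C v * (E - C (E.coeff 0)) + C b,
    mem_degreeLT.mp (hlift u a), mem_degreeLT.mp (hlift v b), by simp, by simp, ?_⟩
  have huv' := congrArg C huv
  have hab' := congrArg C hab
  simp only [map_add, map_mul, map_one] at huv' hab'
  linear_combination (E - C (E.coeff 0)) * huv' + hab'

section IsDomain

variable [IsDomain R]

theorem exists_irreducible_add_irreducible (f : R[X]) (hf : 0 < f.natDegree) {ε p q : R}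
    (hε : IsUnit ε) (hp : Prime p) (hq : Prime q) (hmq : IsCoprime (f.leadingCoeff - ε) q)
    (hpm : IsCoprime (q ^ 2 * (f.leadingCoeff - ε)) (p ^ 2)) :
    ∃ g h : R[X], Irreducible g ∧ Irreducible h ∧ f = g + h ∧
      g.natDegree = f.natDegree ∧ h.natDegree = f.natDegree := by
  have hpq : IsCoprime p q := ((IsCoprime.pow_iff two_pos two_pos).mp hpm.of_mul_left_left).symm
  have hm0 : f.leadingCoeff - ε ≠ 0 := by
    rintro h
    exact hq.not_isUnit (isCoprime_zero_left.mp (h ▸ hmq))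
  have hf0 : f ≠ 0 := ne_zero_of_natDegree_gt hf
  have hE : f.eraseLead.degree < f.natDegree :=
    (degree_eraseLead_lt hf0).trans_eq (degree_eq_natDegree hf0)
  obtain ⟨s, t, hst⟩ := hpm.exists_mul_one_add_mul_add_mul_one_add_mul_eq (f.eraseLead.coeff 0)
  obtain ⟨G, H, hG, hH, hG0, hH0, hGH⟩ := exists_C_mul_add_C_mul_eq hf hE hpq hst
  refine ⟨C ε * X ^ f.natDegree + C p * G, C (f.leadingCoeff - ε) * X ^ f.natDegree + C q * H,
    irreducible_C_mul_X_pow_add_C_mul hp hf hG ?_ ?_,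
    irreducible_C_mul_X_pow_add_C_mul hq hf hH ?_ ?_, ?_,
    natDegree_C_mul_X_pow_add_C_mul hε.ne_zero p hG, natDegree_C_mul_X_pow_add_C_mul hm0 q hH⟩
  · rw [hG0, dvd_add_left (dvd_mul_right p s)]
    exact hp.not_dvd_one
  · exact isCoprime_one_left.of_isCoprime_of_dvd_left hε.dvd
  · rw [hH0, mul_assoc, dvd_add_left (dvd_mul_right q _)]
    exact hq.not_dvd_one
  · rw [hH0]
    exact hmq.mul_right ⟨-(q * t), 1, by ring⟩
  · rw [map_sub]
    linear_combination -(eraseLead_add_C_mul_X_pow f) - hGH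

end IsDomain

end Polynomial

theorem hayes_polynomial_goldbach (f : Polynomial ℤ) (hf : 1 ≤ f.natDegree) :
    ∃ g h : Polynomial ℤ, Irreducible g ∧ Irreducible h ∧ f = g + h ∧
      g.natDegree = f.natDegree ∧ h.natDegree = f.natDegree := by
  obtain ⟨ε, hε, hm⟩ : ∃ ε : ℤ, IsUnit ε ∧ f.leadingCoeff - ε ≠ 0 := by
    by_cases h1 : f.leadingCoeff = 1
    · exact ⟨-1, isUnit_one.neg, by omega⟩
    · exact ⟨1, isUnit_one, sub_ne_zero.mpr h1⟩
  obtain ⟨q, hq, hqm⟩ := Int.exists_prime_not_dvd hm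
  obtain ⟨p, hp, hpm⟩ := Int.exists_prime_not_dvd
    (mul_ne_zero (pow_ne_zero 2 hq.ne_zero) hm)
  exact exists_irreducible_add_irreducible f hf hε hp hq (hq.coprime_iff_not_dvd.mpr hqm).symm
    ((hp.coprime_iff_not_dvd.mpr hpm).symm.pow_right)
end
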